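/- (No smooth invariant measure for the Suslov problem in a gravitational field.) Consider the Suslov system on ℝ⁵ with parameters I₁, I₂ > 0, I₁₃ ≠ 0, I₂₃ ∈ ℝ with a₃/I₂₃ > 0, and linear potential U(γ) = a₁γ₁ + a₂γ₂ + a₃γ₃, with defining vector field v. Then there is no C¹ function ρ, defined and strictly positive on any open neighborhood of the equilibrium point x₀ = (0, −√(a₃/I₂₃), 0, 1, 0), satisfying the Liouville equation div(ρ·v) = 0 on that neighborhood; in particular the system has no invariant measure with smooth positive density on ℝ⁵. -/

import Mathlib

/-- The Suslov system on ℝ⁵, coordinates `x = (ω₁, ω₂, γ₁, γ₂, γ₃)`, with parameters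
`I₁, I₂ > 0`, `I₁₃, I₂₃ ∈ ℝ` and the linear potential `U = a₁γ₁ + a₂γ₂ + a₃γ₃`:
`I₁ω̇₁ = −ω₂(I₁₃ω₁+I₂₃ω₂) + γ₂a₃ − γ₃a₂`, `I₂ω̇₂ = ω₁(I₁₃ω₁+I₂₃ω₂) + γ₃a₁ − γ₁a₃`,
`γ̇₁ = −γ₃ω₂`, `γ̇₂ = γ₃ω₁`, `γ̇₃ = γ₁ω₂ − γ₂ω₁`. -/
noncomputable def suslovLin (I₁ I₂ I₁₃ I₂₃ a₁ a₂ a₃ : ℝ) (x : Fin 5 → ℝ) : Fin 5 → ℝ :=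
  ![(-(x 1) * (I₁₃ * x 0 + I₂₃ * x 1) + x 3 * a₃ - x 4 * a₂) / I₁,
    ((x 0) * (I₁₃ * x 0 + I₂₃ * x 1) + x 4 * a₁ - x 2 * a₃) / I₂,
    -(x 4) * x 1,
    (x 4) * x 0,
    x 2 * x 1 - x 3 * x 0]

/-!
The point `x₀` is an equilibrium of the vector field `v`, so at `x₀` the Liouville equation
`div(ρ v) = ρ div v + dρ(v)` reduces to `ρ(x₀) div v(x₀) = 0`. But
`div v = I₂₃ ω₁ / I₂ − I₁₃ ω₂ / I₁`, which at `x₀` equals `I₁₃ √(a₃/I₂₃) / I₁ ≠ 0`.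
-/

noncomputable def divergence {ι : Type*} [Fintype ι] [DecidableEq ι]
    (v : (ι → ℝ) → ι → ℝ) (x : ι → ℝ) : ℝ :=
  ∑ i, fderiv ℝ (fun y => v y i) x (Pi.single i 1)

section Divergence

variable {ι : Type*} [Fintype ι] [DecidableEq ι] {ρ : (ι → ℝ) → ℝ} {v : (ι → ℝ) → ι → ℝ}
  {x : ι → ℝ}

theorem divergence_mul (hρ : DifferentiableAt ℝ ρ x) (hv : DifferentiableAt ℝ v x) :
    divergence (fun y i => ρ y * v y i) x = ρ x * divergence v x + fderiv ℝ ρ x (v x) := by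
  have hvi := differentiableAt_pi.mp hv
  simp only [divergence, fderiv_fun_mul hρ (hvi _), add_apply,
    smul_apply, smul_eq_mul, Finset.sum_add_distrib, Finset.mul_sum]
  congr 1
  simp_rw [← smul_eq_mul, ← map_smul, ← map_sum, ← pi_eq_sum_univ']

theorem divergence_eq_zero_of_divergence_mul_eq_zero (hρ : DifferentiableAt ℝ ρ x)
    (hv : DifferentiableAt ℝ v x) (hρx : ρ x ≠ 0) (hvx : v x = 0)
    (h : divergence (fun y i => ρ y * v y i) x = 0) : divergence v x = 0 := by
  rw [divergence_mul hρ hv, hvx, map_zero, add_zero] at h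
  exact (mul_eq_zero.mp h).resolve_left hρx

omit [Fintype ι] [DecidableEq ι] in
theorem fderiv_eval (i : ι) :
    fderiv ℝ (fun y : ι → ℝ => y i) x = ContinuousLinearMap.proj i :=
  (hasFDerivAt_apply i x).fderiv

end Divergence

section Suslov

variable (I₁ I₂ I₁₃ I₂₃ a₁ a₂ a₃ : ℝ)

theorem differentiable_suslovLin : Differentiable ℝ (suslovLin I₁ I₂ I₁₃ I₂₃ a₁ a₂ a₃) := by
  refine differentiable_pi.mpr fun i => ?_
  fin_cases i <;>
    simp only [suslovLin, Fin.zero_eta, Fin.mk_one, Fin.reduceFinMk, Matrix.cons_val] <;> fun_prop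

theorem divergence_suslovLin (x : Fin 5 → ℝ) :
    divergence (suslovLin I₁ I₂ I₁₃ I₂₃ a₁ a₂ a₃) x = I₂₃ * x 0 / I₂ - I₁₃ * x 1 / I₁ := by
  simp only [divergence, Fin.sum_univ_five, suslovLin, Matrix.cons_val, div_eq_mul_inv]
  simp (disch := fun_prop) only [fderiv_mul_const, fderiv_fun_mul, fderiv_fun_add,
    fderiv_fun_sub, fderiv_fun_neg, fderiv_eval]
  simp only [fderiv_fun_const, add_apply, sub_apply, neg_apply, smul_apply, smul_eq_mul,
    ContinuousLinearMap.proj_apply, Pi.zero_apply, Pi.single_apply, Fin.reduceEq, if_true,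
    if_false, mul_one, mul_zero, smul_zero, zero_apply]
  ring

theorem suslovLin_equilibrium {s : ℝ} (hs : I₂₃ * s ^ 2 = a₃) :
    suslovLin I₁ I₂ I₁₃ I₂₃ a₁ a₂ a₃ ![0, -s, 0, 1, 0] = 0 := by
  ext i
  fin_cases i <;> simp [suslovLin, ← hs, sq, mul_left_comm s I₂₃]

end Suslov

theorem suslov_no_smooth_invariant_measure_general
    (I₁ I₂ I₁₃ I₂₃ a₁ a₂ a₃ : ℝ) (hI₁ : 0 < I₁)
    (hI₁₃ : I₁₃ ≠ 0) (ha : 0 < a₃ / I₂₃) :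
    ¬ ∃ (Ω : Set (Fin 5 → ℝ)) (ρ : (Fin 5 → ℝ) → ℝ),
        IsOpen Ω ∧ (![0, -Real.sqrt (a₃ / I₂₃), 0, 1, 0] : Fin 5 → ℝ) ∈ Ω ∧
        ContDiffOn ℝ 1 ρ Ω ∧ (∀ x ∈ Ω, 0 < ρ x) ∧
        (∀ x ∈ Ω, ∑ i, fderiv ℝ
            (fun y => ρ y * suslovLin I₁ I₂ I₁₃ I₂₃ a₁ a₂ a₃ y i) x (Pi.single i 1) = 0) := by
  rintro ⟨Ω, ρ, hΩ, hx₀, hρ, hpos, hdiv⟩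
  set s := Real.sqrt (a₃ / I₂₃)
  have hI₂₃ : I₂₃ ≠ 0 := by rintro rfl; simp at ha
  have hs : I₂₃ * s ^ 2 = a₃ := by rw [Real.sq_sqrt ha.le]; field_simp
  have hρx₀ : DifferentiableAt ℝ ρ ![0, -s, 0, 1, 0] :=
    (hρ.contDiffAt (hΩ.mem_nhds hx₀)).differentiableAt one_ne_zero
  have hdiv_v := divergence_eq_zero_of_divergence_mul_eq_zero hρx₀
    (differentiable_suslovLin I₁ I₂ I₁₃ I₂₃ a₁ a₂ a₃).differentiableAt (hpos _ hx₀).ne'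
    (suslovLin_equilibrium I₁ I₂ I₁₃ I₂₃ a₁ a₂ a₃ hs) (hdiv _ hx₀)
  rw [divergence_suslovLin] at hdiv_v
  have hs₀ : s ≠ 0 := (Real.sqrt_pos.mpr ha).ne'
  simp [hI₁₃, hI₁.ne', hs₀] at hdiv_v

/-- **no smooth invariant measure for the Suslov problem in a gravitational
field.** For the Suslov system with linear potential, `I₁₃ ≠ 0` and `a₃/I₂₃ > 0`, there is
no `C¹` strictly positive density `ρ` on any open neighborhood of the equilibrium
`x₀ = (0, −√(a₃/I₂₃), 0, 1, 0)` satisfying the Liouville equation `div(ρ·v) = 0` there;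
in particular the system has no invariant measure with smooth positive density on ℝ⁵. -/
theorem suslov_no_smooth_invariant_measure
    (I₁ I₂ I₁₃ I₂₃ a₁ a₂ a₃ : ℝ) (hI₁ : 0 < I₁) (hI₂ : 0 < I₂)
    (hI₁₃ : I₁₃ ≠ 0) (ha : 0 < a₃ / I₂₃) :
    ¬ ∃ (Ω : Set (Fin 5 → ℝ)) (ρ : (Fin 5 → ℝ) → ℝ),
        IsOpen Ω ∧ (![0, -Real.sqrt (a₃ / I₂₃), 0, 1, 0] : Fin 5 → ℝ) ∈ Ω ∧
        ContDiffOn ℝ 1 ρ Ω ∧ (∀ x ∈ Ω, 0 < ρ x) ∧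
        (∀ x ∈ Ω, ∑ i, fderiv ℝ
            (fun y => ρ y * suslovLin I₁ I₂ I₁₃ I₂₃ a₁ a₂ a₃ y i) x (Pi.single i 1) = 0) :=
  suslov_no_smooth_invariant_measure_general I₁ I₂ I₁₃ I₂₃ a₁ a₂ a₃ hI₁ hI₁₃ ha
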